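/- Let N be a Nijenhuis operator on a compatible 3-Lie algebra (g,[·,·,·],{·,·,·}). Then (g,[·,·,·]_N,{·,·,·}_N) is again a compatible 3-Lie algebra, and N is a compatible 3-Lie algebra homomorphism from (g,[·,·,·]_N,{·,·,·}_N) to (g,[·,·,·],{·,·,·}). -/

import Mathlib

section Defs

/-- A map `G × G × G → H` is trilinear if it is linear in each argument. -/
def IsTrilinearMap (K : Type*) {G H : Type*} [Field K] [AddCommGroup G] [Module K G]
    [AddCommGroup H] [Module K H] (b : G → G → G → H) : Prop :=
  (∀ y z, IsLinearMap K (fun x => b x y z)) ∧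
  (∀ x z, IsLinearMap K (fun y => b x y z)) ∧
  (∀ x y, IsLinearMap K (fun z => b x y z))

/-- Skew-symmetry of a ternary bracket. -/
def IsSkewSym {G H : Type*} [AddCommGroup G] [AddCommGroup H] (b : G → G → G → H) : Prop :=
  (∀ x y z, b x y z = - b y x z) ∧ (∀ x y z, b x y z = - b x z y)

/-- The Fundamental Identity of a 3-Lie algebra. -/
def FundIdent {G : Type*} [AddCommGroup G] (b : G → G → G → G) : Prop :=
  ∀ x₁ x₂ x₃ x₄ x₅, b x₁ x₂ (b x₃ x₄ x₅) =
    b (b x₁ x₂ x₃) x₄ x₅ + b x₃ (b x₁ x₂ x₄) x₅ + b x₃ x₄ (b x₁ x₂ x₅)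

/-- A 3-Lie algebra structure: a skew-symmetric trilinear bracket satisfying
the Fundamental Identity. -/
def Is3Lie (K : Type*) {G : Type*} [Field K] [AddCommGroup G] [Module K G]
    (b : G → G → G → G) : Prop :=
  IsTrilinearMap K b ∧ IsSkewSym b ∧ FundIdent b

/-- The compatibility condition (2.4) between two ternary brackets. -/
def Compat {G : Type*} [AddCommGroup G] (b₁ b₂ : G → G → G → G) : Prop :=
  ∀ x₁ x₂ x₃ x₄ x₅,
    b₁ x₁ x₂ (b₂ x₃ x₄ x₅) + b₂ x₁ x₂ (b₁ x₃ x₄ x₅) =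
    b₁ (b₂ x₁ x₂ x₃) x₄ x₅ + b₂ (b₁ x₁ x₂ x₃) x₄ x₅
    + b₁ x₃ (b₂ x₁ x₂ x₄) x₅ + b₂ x₃ (b₁ x₁ x₂ x₄) x₅
    + b₁ x₃ x₄ (b₂ x₁ x₂ x₅) + b₂ x₃ x₄ (b₁ x₁ x₂ x₅)

/-- The linear combination `k₁ • b₁ + k₂ • b₂` of two ternary brackets. -/
def combBracket {K G : Type*} [Field K] [AddCommGroup G] [Module K G]
    (k₁ k₂ : K) (b₁ b₂ : G → G → G → G) : G → G → G → G :=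
  fun x y z => k₁ • b₁ x y z + k₂ • b₂ x y z

/-- Nijenhuis operator condition for a ternary bracket. -/
def IsNijenhuis {K G : Type*} [Field K] [AddCommGroup G] [Module K G]
    (b : G → G → G → G) (N : G →ₗ[K] G) : Prop :=
  ∀ x y z, b (N x) (N y) (N z) =
    N (b (N x) (N y) z + b x (N y) (N z) + b (N x) y (N z)
      - N (b (N x) y z) - N (b x (N y) z) - N (b x y (N z)) + N (N (b x y z)))

/-- The deformed bracket `[·,·,·]_N` associated to a linear map `N`. -/
def deformedBracket {K G : Type*} [Field K] [AddCommGroup G] [Module K G]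
    (b : G → G → G → G) (N : G →ₗ[K] G) : G → G → G → G :=
  fun x y z =>
    b (N x) (N y) z + b x (N y) (N z) + b (N x) y (N z)
      - N (b (N x) y z) - N (b x (N y) z) - N (b x y (N z)) + N (N (b x y z))

/-- The mixed (degree one) compatibility/cocycle condition between two brackets
`b₁, b₂` and two 2-cochains `w₁, w₂`: the sum of the mixed versions of the
compatibility condition. -/
def MixedCocycleCond {G : Type*} [AddCommGroup G]
    (b₁ b₂ w₁ w₂ : G → G → G → G) : Prop :=
  ∀ x₁ x₂ x₃ x₄ x₅,
    b₁ x₁ x₂ (w₂ x₃ x₄ x₅) + w₂ x₁ x₂ (b₁ x₃ x₄ x₅)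
    + b₂ x₁ x₂ (w₁ x₃ x₄ x₅) + w₁ x₁ x₂ (b₂ x₃ x₄ x₅) =
    b₁ (w₂ x₁ x₂ x₃) x₄ x₅ + w₂ (b₁ x₁ x₂ x₃) x₄ x₅
    + b₂ (w₁ x₁ x₂ x₃) x₄ x₅ + w₁ (b₂ x₁ x₂ x₃) x₄ x₅
    + b₁ x₃ (w₂ x₁ x₂ x₄) x₅ + w₂ x₃ (b₁ x₁ x₂ x₄) x₅
    + b₂ x₃ (w₁ x₁ x₂ x₄) x₅ + w₁ x₃ (b₂ x₁ x₂ x₄) x₅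
    + b₁ x₃ x₄ (w₂ x₁ x₂ x₅) + w₂ x₃ x₄ (b₁ x₁ x₂ x₅)
    + b₂ x₃ x₄ (w₁ x₁ x₂ x₅) + w₁ x₃ x₄ (b₂ x₁ x₂ x₅)

/-- `ρ : Λ²g → gl(V)` as a skew-symmetric bilinear map into endomorphisms. -/
def IsRepMap (K : Type*) {G V : Type*} [Field K] [AddCommGroup G] [Module K G]
    [AddCommGroup V] [Module K V] (ρ : G → G → Module.End K V) : Prop :=
  (∀ y, IsLinearMap K (fun x => ρ x y)) ∧ (∀ x, IsLinearMap K (fun y => ρ x y)) ∧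
  (∀ x y, ρ x y = - ρ y x)

/-- The representation conditions of a 3-Lie algebra. -/
def Is3LieRep {K G V : Type*} [Field K] [AddCommGroup G] [Module K G]
    [AddCommGroup V] [Module K V] (b : G → G → G → G)
    (ρ : G → G → Module.End K V) : Prop :=
  (∀ x₁ x₂ x₃ x₄, ρ x₁ x₂ * ρ x₃ x₄ =
      ρ (b x₁ x₂ x₃) x₄ + ρ x₃ (b x₁ x₂ x₄) + ρ x₃ x₄ * ρ x₁ x₂) ∧
  (∀ x₁ x₂ x₃ x₄, ρ x₁ (b x₂ x₃ x₄) =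
      ρ x₃ x₄ * ρ x₁ x₂ - ρ x₂ x₄ * ρ x₁ x₃ + ρ x₂ x₃ * ρ x₁ x₄)

/-- The two mixed compatibility identities of a representation of a compatible
3-Lie algebra. -/
def CompatRep {K G V : Type*} [Field K] [AddCommGroup G] [Module K G]
    [AddCommGroup V] [Module K V] (b₁ b₂ : G → G → G → G)
    (ρ μ : G → G → Module.End K V) : Prop :=
  (∀ x₁ x₂ x₃ x₄,
    ρ (b₂ x₁ x₂ x₃) x₄ + μ (b₁ x₁ x₂ x₃) x₄ + ρ x₃ (b₂ x₁ x₂ x₄) + μ x₃ (b₁ x₁ x₂ x₄)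
      = (ρ x₁ x₂ * μ x₃ x₄ - μ x₃ x₄ * ρ x₁ x₂)
        - (ρ x₃ x₄ * μ x₁ x₂ - μ x₁ x₂ * ρ x₃ x₄)) ∧
  (∀ x₁ x₂ x₃ x₄,
    ρ (b₂ x₁ x₂ x₃) x₄ + μ (b₁ x₁ x₂ x₃) x₄ - ρ x₃ x₁ * μ x₂ x₄ - μ x₃ x₁ * ρ x₂ x₄
      = ρ x₁ x₂ * μ x₃ x₄ + μ x₁ x₂ * ρ x₃ x₄ + ρ x₂ x₃ * μ x₁ x₄ + μ x₂ x₃ * ρ x₁ x₄)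

/-- The semidirect product bracket on `g ⊕ V`. -/
def sdBracket {K G V : Type*} [Field K] [AddCommGroup G] [Module K G]
    [AddCommGroup V] [Module K V] (b : G → G → G → G)
    (ρ : G → G → Module.End K V) : G × V → G × V → G × V → G × V :=
  fun p q r => (b p.1 q.1 r.1, ρ p.1 q.1 r.2 + ρ q.1 r.1 p.2 + ρ r.1 p.1 q.2)

/-- The 2-cocycle expression of a 2-cochain `w` with coefficients in a
representation `ρ` of the 3-Lie algebra `(g,b)`. -/
def CocycleExpr {K G V : Type*} [Field K] [AddCommGroup G] [Module K G]
    [AddCommGroup V] [Module K V] (b : G → G → G → G)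
    (ρ : G → G → Module.End K V) (w : G → G → G → V) (x₁ x₂ x₃ x₄ x₅ : G) : V :=
  w x₁ x₂ (b x₃ x₄ x₅) - w (b x₁ x₂ x₃) x₄ x₅ - w x₃ (b x₁ x₂ x₄) x₅
    - w x₃ x₄ (b x₁ x₂ x₅)
  + ρ x₁ x₂ (w x₃ x₄ x₅) - ρ x₃ x₄ (w x₁ x₂ x₅) - ρ x₄ x₅ (w x₁ x₂ x₃)
    - ρ x₅ x₃ (w x₁ x₂ x₄)

/-- The bracket on `g ⊕ V` twisted by a 2-cochain `w`. -/
def extBracket {K G V : Type*} [Field K] [AddCommGroup G] [Module K G]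
    [AddCommGroup V] [Module K V] (b : G → G → G → G)
    (ρ : G → G → Module.End K V) (w : G → G → G → V) :
    G × V → G × V → G × V → G × V :=
  fun p q r => (b p.1 q.1 r.1,
    ρ p.1 q.1 r.2 + ρ q.1 r.1 p.2 + ρ r.1 p.1 q.2 + w p.1 q.1 r.1)

end Defs

/-! For every scalar `t`, the Nijenhuis condition says exactly that `id + t N` is a homomorphism
from the bracket `b + t ν + t² b_N` to `b`, where `ν(x,y,z) = b(Nx,y,z) + b(x,Ny,z) + b(x,y,Nz) -
N b(x,y,z)`. Pulling the Fundamental Identity of `b` back along it, the defect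
`D(t) = d₀ + t d₁ + ⋯ + t⁴ d₄` of the Fundamental Identity of `b + t ν + t² b_N` satisfies
`(id + t N) D(t) = 0` for all `t`. Over an infinite field the coefficients `d₀, d₁ + N d₀, …,
d₄ + N d₃, N d₄` of this polynomial all vanish, hence inductively so do `d₀, …, d₄`, and `d₄` is
the defect of `b_N`. Compatibility follows by applying this to the 3-Lie bracket `b₁ + b₂`, for
which `N` is again Nijenhuis and whose deformed bracket is the sum of the two deformed brackets. -/

namespace IsTrilinearMap

variable {K G H : Type*} [Field K] [AddCommGroup G] [Module K G] [AddCommGroup H] [Module K H]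
  {b b' : G → G → G → H}

theorem map_add₁ (h : IsTrilinearMap K b) (u v y z : G) :
    b (u + v) y z = b u y z + b v y z :=
  (h.1 y z).map_add u v

theorem map_smul₁ (h : IsTrilinearMap K b) (c : K) (u y z : G) :
    b (c • u) y z = c • b u y z :=
  (h.1 y z).map_smul c u

theorem map_add₂ (h : IsTrilinearMap K b) (x u v z : G) :
    b x (u + v) z = b x u z + b x v z :=
  (h.2.1 x z).map_add u v

theorem map_smul₂ (h : IsTrilinearMap K b) (c : K) (x u z : G) :
    b x (c • u) z = c • b x u z :=
  (h.2.1 x z).map_smul c u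

theorem map_add₃ (h : IsTrilinearMap K b) (x y u v : G) :
    b x y (u + v) = b x y u + b x y v :=
  (h.2.2 x y).map_add u v

theorem map_smul₃ (h : IsTrilinearMap K b) (c : K) (x y u : G) :
    b x y (c • u) = c • b x y u :=
  (h.2.2 x y).map_smul c u

protected theorem add (h : IsTrilinearMap K b) (h' : IsTrilinearMap K b') :
    IsTrilinearMap K (b + b') := by
  refine ⟨fun y z => ⟨fun u v => ?_, fun c u => ?_⟩,
    fun x z => ⟨fun u v => ?_, fun c u => ?_⟩,
    fun x y => ⟨fun u v => ?_, fun c u => ?_⟩⟩ <;>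
  simp only [Pi.add_apply, h.map_add₁, h'.map_add₁, h.map_add₂, h'.map_add₂, h.map_add₃,
    h'.map_add₃, h.map_smul₁, h'.map_smul₁, h.map_smul₂, h'.map_smul₂, h.map_smul₃,
    h'.map_smul₃, smul_add] <;>
  abel

end IsTrilinearMap

section Deformation

variable {K G : Type*} [Field K] [AddCommGroup G] [Module K G]
  {b b₁ b₂ : G → G → G → G} {N : G →ₗ[K] G}

def firstOrderDeformation (b : G → G → G → G) (N : G →ₗ[K] G) : G → G → G → G :=
  fun x y z => b (N x) y z + b x (N y) z + b x y (N z) - N (b x y z)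

def deformationFamily (b : G → G → G → G) (N : G →ₗ[K] G) (t : K) : G → G → G → G :=
  fun x y z => b x y z + t • firstOrderDeformation b N x y z + t ^ 2 • deformedBracket b N x y z

theorem isTrilinearMap_firstOrderDeformation (hb : IsTrilinearMap K b) :
    IsTrilinearMap K (firstOrderDeformation b N) := by
  refine ⟨fun y z => ⟨fun u v => ?_, fun c u => ?_⟩,
    fun x z => ⟨fun u v => ?_, fun c u => ?_⟩,
    fun x y => ⟨fun u v => ?_, fun c u => ?_⟩⟩ <;>
  simp only [firstOrderDeformation, map_add, map_smul, hb.map_add₁, hb.map_smul₁, hb.map_add₂,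
    hb.map_smul₂, hb.map_add₃, hb.map_smul₃] <;>
  module

theorem isTrilinearMap_deformedBracket (hb : IsTrilinearMap K b) :
    IsTrilinearMap K (deformedBracket b N) := by
  refine ⟨fun y z => ⟨fun u v => ?_, fun c u => ?_⟩,
    fun x z => ⟨fun u v => ?_, fun c u => ?_⟩,
    fun x y => ⟨fun u v => ?_, fun c u => ?_⟩⟩ <;>
  simp only [deformedBracket, map_add, map_smul, hb.map_add₁, hb.map_smul₁, hb.map_add₂,
    hb.map_smul₂, hb.map_add₃, hb.map_smul₃] <;>
  module

theorem isSkewSym_deformedBracket (hs : IsSkewSym b) : IsSkewSym (deformedBracket b N) := by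
  constructor <;> intro x y z <;> simp only [deformedBracket]
  · rw [hs.1 (N x) (N y) z, hs.1 x (N y) (N z), hs.1 (N x) y (N z), hs.1 (N x) y z,
      hs.1 x (N y) z, hs.1 x y (N z), hs.1 x y z]
    simp only [map_neg]
    abel
  · rw [hs.2 (N x) (N y) z, hs.2 x (N y) (N z), hs.2 (N x) y (N z), hs.2 (N x) y z,
      hs.2 x (N y) z, hs.2 x y (N z), hs.2 x y z]
    simp only [map_neg]
    abel

theorem IsNijenhuis.map_deformedBracket (hN : IsNijenhuis b N) (x y z : G) :
    N (deformedBracket b N x y z) = b (N x) (N y) (N z) :=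
  (hN x y z).symm

theorem IsNijenhuis.map_deformationFamily (hb : IsTrilinearMap K b) (hN : IsNijenhuis b N)
    (t : K) :
    let T : G →ₗ[K] G := LinearMap.id + t • N
    ∀ x y z, T (deformationFamily b N t x y z) = b (T x) (T y) (T z) := by
  intro T x y z
  simp only [T, LinearMap.add_apply, LinearMap.id_apply, LinearMap.smul_apply, hb.map_add₁,
    hb.map_add₂, hb.map_add₃, hb.map_smul₁, hb.map_smul₂, hb.map_smul₃]
  rw [hN x y z]
  simp only [deformationFamily, firstOrderDeformation, deformedBracket, map_add, map_sub,
    map_smul]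
  module

theorem IsNijenhuis.add (hN₁ : IsNijenhuis b₁ N) (hN₂ : IsNijenhuis b₂ N) :
    IsNijenhuis (b₁ + b₂) N := by
  intro x y z
  simp only [Pi.add_apply, hN₁ x y z, hN₂ x y z, map_add, map_sub]
  abel

theorem deformedBracket_add :
    deformedBracket (b₁ + b₂) N = deformedBracket b₁ N + deformedBracket b₂ N := by
  funext x y z
  simp only [deformedBracket, Pi.add_apply, map_add]
  abel

end Deformation

section FundamentalIdentity

variable {K G : Type*} [Field K] [AddCommGroup G] [Module K G]
  {b b' b₁ b₂ : G → G → G → G} {N : G →ₗ[K] G}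

def fundDefect (f g : G → G → G → G) (x₁ x₂ x₃ x₄ x₅ : G) : G :=
  f x₁ x₂ (g x₃ x₄ x₅) - f (g x₁ x₂ x₃) x₄ x₅ - f x₃ (g x₁ x₂ x₄) x₅ - f x₃ x₄ (g x₁ x₂ x₅)

theorem fundIdent_iff_fundDefect_eq_zero :
    FundIdent b ↔ ∀ x₁ x₂ x₃ x₄ x₅, fundDefect b b x₁ x₂ x₃ x₄ x₅ = 0 := by
  simp only [FundIdent, fundDefect, sub_sub, sub_eq_zero]

theorem fundDefect_map (T : G →ₗ[K] G) (hT : ∀ x y z, T (b' x y z) = b (T x) (T y) (T z))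
    (x₁ x₂ x₃ x₄ x₅ : G) :
    T (fundDefect b' b' x₁ x₂ x₃ x₄ x₅) = fundDefect b b (T x₁) (T x₂) (T x₃) (T x₄) (T x₅) := by
  simp only [fundDefect, map_sub, hT]

theorem fundDefect_deformationFamily (hb : IsTrilinearMap K b) (t : K) (x₁ x₂ x₃ x₄ x₅ : G) :
    fundDefect (deformationFamily b N t) (deformationFamily b N t) x₁ x₂ x₃ x₄ x₅ =
      fundDefect b b x₁ x₂ x₃ x₄ x₅
      + t • (fundDefect b (firstOrderDeformation b N) x₁ x₂ x₃ x₄ x₅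
          + fundDefect (firstOrderDeformation b N) b x₁ x₂ x₃ x₄ x₅)
      + t ^ 2 • (fundDefect b (deformedBracket b N) x₁ x₂ x₃ x₄ x₅
          + fundDefect (firstOrderDeformation b N) (firstOrderDeformation b N) x₁ x₂ x₃ x₄ x₅
          + fundDefect (deformedBracket b N) b x₁ x₂ x₃ x₄ x₅)
      + t ^ 3 • (fundDefect (firstOrderDeformation b N) (deformedBracket b N) x₁ x₂ x₃ x₄ x₅
          + fundDefect (deformedBracket b N) (firstOrderDeformation b N) x₁ x₂ x₃ x₄ x₅)
      + t ^ 4 • fundDefect (deformedBracket b N) (deformedBracket b N) x₁ x₂ x₃ x₄ x₅ := by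
  have hν := isTrilinearMap_firstOrderDeformation (N := N) hb
  have hd := isTrilinearMap_deformedBracket (N := N) hb
  simp only [fundDefect, deformationFamily, hb.map_add₁, hb.map_add₂, hb.map_add₃, hb.map_smul₁,
    hb.map_smul₂, hb.map_smul₃, hν.map_add₁, hν.map_add₂, hν.map_add₃, hν.map_smul₁,
    hν.map_smul₂, hν.map_smul₃, hd.map_add₁, hd.map_add₂, hd.map_add₃, hd.map_smul₁,
    hd.map_smul₂, hd.map_smul₃]
  module

open Polynomial in
theorem eq_zero_of_forall_sum_pow_smul_eq_zero [Infinite K] {n : ℕ} (c : Fin n → G)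
    (h : ∀ t : K, ∑ i : Fin n, t ^ (i : ℕ) • c i = 0) (i : Fin n) : c i = 0 := by
  refine (Module.forall_dual_apply_eq_zero_iff K (c i)).mp fun f => ?_
  have hp : ∑ j : Fin n, C (f (c j)) * X ^ (j : ℕ) = 0 := Polynomial.funext fun t => by
    have hft := congrArg f (h t)
    simp only [map_sum, map_smul, smul_eq_mul, map_zero] at hft
    simp only [eval_finsetSum, eval_mul, eval_C, eval_pow, eval_X, eval_zero, ← hft, mul_comm]
  simpa [finsetSum_coeff, coeff_C_mul_X_pow, Fin.val_inj] using congrArg (coeff · i) hp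

theorem eq_zero_of_forall_id_add_smul_apply_eq_zero [Infinite K] (N : G →ₗ[K] G)
    (d₀ d₁ d₂ d₃ d₄ : G)
    (h : ∀ t : K,
      (LinearMap.id + t • N : G →ₗ[K] G) (d₀ + t • d₁ + t ^ 2 • d₂ + t ^ 3 • d₃ + t ^ 4 • d₄) = 0) :
    d₀ = 0 ∧ d₁ = 0 ∧ d₂ = 0 ∧ d₃ = 0 ∧ d₄ = 0 := by
  have hc := eq_zero_of_forall_sum_pow_smul_eq_zero
    ![d₀, d₁ + N d₀, d₂ + N d₁, d₃ + N d₂, d₄ + N d₃, N d₄] fun t => by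
      have ht := h t
      simp only [LinearMap.add_apply, LinearMap.id_apply, LinearMap.smul_apply, map_add,
        map_smul] at ht
      simp only [Fin.sum_univ_six, Fin.isValue, Fin.coe_ofNat_eq_mod, Matrix.cons_val]
      linear_combination (norm := module) ht
  have h₀ : d₀ = 0 := hc 0
  have h₁ : d₁ = 0 := by simpa [h₀] using hc 1
  have h₂ : d₂ = 0 := by simpa [h₁] using hc 2
  have h₃ : d₃ = 0 := by simpa [h₂] using hc 3
  exact ⟨h₀, h₁, h₂, h₃, by simpa [h₃] using hc 4⟩

theorem fundIdent_deformedBracket [Infinite K] (hb : IsTrilinearMap K b) (hf : FundIdent b)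
    (hN : IsNijenhuis b N) : FundIdent (deformedBracket b N) := by
  rw [fundIdent_iff_fundDefect_eq_zero] at hf ⊢
  intro x₁ x₂ x₃ x₄ x₅
  have hT (t : K) := (fundDefect_map _ (hN.map_deformationFamily hb t) x₁ x₂ x₃ x₄ x₅).trans
    (hf _ _ _ _ _)
  simp only [fundDefect_deformationFamily hb] at hT
  exact (eq_zero_of_forall_id_add_smul_apply_eq_zero N _ _ _ _ _ hT).2.2.2.2

theorem compat_iff_fundIdent_add (hb₁ : IsTrilinearMap K b₁) (hb₂ : IsTrilinearMap K b₂)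
    (hf₁ : FundIdent b₁) (hf₂ : FundIdent b₂) : Compat b₁ b₂ ↔ FundIdent (b₁ + b₂) := by
  refine forall₅_congr fun x₁ x₂ x₃ x₄ x₅ => ?_
  simp only [Pi.add_apply, hb₁.map_add₁, hb₂.map_add₁, hb₁.map_add₂, hb₂.map_add₂,
    hb₁.map_add₃, hb₂.map_add₃]
  constructor <;> intro h
  · linear_combination (norm := abel) hf₁ x₁ x₂ x₃ x₄ x₅ + hf₂ x₁ x₂ x₃ x₄ x₅ + h
  · linear_combination (norm := abel) h - hf₁ x₁ x₂ x₃ x₄ x₅ - hf₂ x₁ x₂ x₃ x₄ x₅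

theorem compat_deformedBracket [Infinite K] (hb₁ : IsTrilinearMap K b₁)
    (hb₂ : IsTrilinearMap K b₂) (hf₁ : FundIdent b₁) (hf₂ : FundIdent b₂) (hc : Compat b₁ b₂)
    (hN₁ : IsNijenhuis b₁ N) (hN₂ : IsNijenhuis b₂ N) :
    Compat (deformedBracket b₁ N) (deformedBracket b₂ N) := by
  have hsum := fundIdent_deformedBracket (hb₁.add hb₂)
    ((compat_iff_fundIdent_add hb₁ hb₂ hf₁ hf₂).1 hc) (hN₁.add hN₂)
  rw [deformedBracket_add] at hsum
  exact (compat_iff_fundIdent_add (isTrilinearMap_deformedBracket hb₁)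
    (isTrilinearMap_deformedBracket hb₂) (fundIdent_deformedBracket hb₁ hf₁ hN₁)
    (fundIdent_deformedBracket hb₂ hf₂ hN₂)).2 hsum

theorem is3Lie_deformedBracket [Infinite K] (h : Is3Lie K b) (hN : IsNijenhuis b N) :
    Is3Lie K (deformedBracket b N) :=
  ⟨isTrilinearMap_deformedBracket h.1, isSkewSym_deformedBracket h.2.1,
    fundIdent_deformedBracket h.1 h.2.2 hN⟩

end FundamentalIdentity

theorem stmt5 {K G : Type*} [Field K] [CharZero K] [AddCommGroup G] [Module K G]
    (b₁ b₂ : G → G → G → G) (h₁ : Is3Lie K b₁) (h₂ : Is3Lie K b₂)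
    (hc : Compat b₁ b₂) (N : G →ₗ[K] G)
    (hN₁ : IsNijenhuis b₁ N) (hN₂ : IsNijenhuis b₂ N) :
    Is3Lie K (deformedBracket b₁ N) ∧ Is3Lie K (deformedBracket b₂ N) ∧
    Compat (deformedBracket b₁ N) (deformedBracket b₂ N) ∧
    (∀ x y z, N (deformedBracket b₁ N x y z) = b₁ (N x) (N y) (N z)) ∧
    (∀ x y z, N (deformedBracket b₂ N x y z) = b₂ (N x) (N y) (N z)) :=
  ⟨is3Lie_deformedBracket h₁ hN₁, is3Lie_deformedBracket h₂ hN₂,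
    compat_deformedBracket h₁.1 h₂.1 h₁.2.2 h₂.2.2 hc hN₁ hN₂, hN₁.map_deformedBracket, hN₂.map_deformedBracket⟩
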